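/- arXiv:1411.5819 — 7 statements merged into one kernel-verified Lean document; each statement's English description precedes it below -/
import Mathlib

section
/- For 0 < m < 1 fixed, the function α ↦ arctan(m·tan α) is convex on the interval [0, π/2). -/
open Real

theorem stmt_3 (m : ℝ) (hm : 0 < m) (hm1 : m < 1) :
    ConvexOn ℝ (Set.Ico 0 (π / 2)) (fun α : ℝ => Real.arctan (m * Real.tan α)) := by
  have hDpos : ∀ α : ℝ, 0 < cos α ^ 2 + m ^ 2 * sin α ^ 2 := by
    intro α
    have h1 : (0:ℝ) ≤ (1 - m ^ 2) * cos α ^ 2 :=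
      mul_nonneg (by nlinarith) (sq_nonneg _)
    nlinarith [sin_sq_add_cos_sq α, mul_pos hm hm]
  have hderiv : ∀ α ∈ Set.Ioo (0:ℝ) (π / 2),
      HasDerivAt (fun α : ℝ => Real.arctan (m * Real.tan α))
        (m / (cos α ^ 2 + m ^ 2 * sin α ^ 2)) α := by
    intro α hα
    have hcos : 0 < cos α := cos_pos_of_mem_Ioo ⟨by linarith [hα.1, pi_pos], hα.2⟩
    have h1 : HasDerivAt (fun α : ℝ => m * Real.tan α) (m * (1 / cos α ^ 2)) α :=
      (Real.hasDerivAt_tan hcos.ne').const_mul m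
    have h2 := (Real.hasDerivAt_arctan (m * Real.tan α)).comp α h1
    refine HasDerivAt.congr_deriv h2 ?_
    rw [Real.tan_eq_sin_div_cos]
    have hc2 : cos α ^ 2 ≠ 0 := by positivity
    have hden : (1 : ℝ) + (m * (sin α / cos α)) ^ 2 ≠ 0 := by positivity
    field_simp
  apply MonotoneOn.convexOn_of_deriv (convex_Ico _ _)
  · -- continuity on Ico
    have hsub : Set.Ico (0:ℝ) (π / 2) ⊆ {x | cos x ≠ 0} := by
      intro x hx
      exact (cos_pos_of_mem_Ioo ⟨by linarith [hx.1, pi_pos], hx.2⟩).ne'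
    exact Real.continuous_arctan.comp_continuousOn
      (continuousOn_const.mul (Real.continuousOn_tan.mono hsub))
  · rw [interior_Ico]
    exact fun α hα => (hderiv α hα).differentiableAt.differentiableWithinAt
  · rw [interior_Ico]
    intro x hx y hy hxy
    rw [(hderiv x hx).deriv, (hderiv y hy).deriv]
    have hsx : 0 ≤ sin x := sin_nonneg_of_nonneg_of_le_pi (le_of_lt hx.1)
      (by linarith [hx.2, pi_pos])
    have hsxy : sin x ≤ sin y := by
      apply Real.sin_le_sin_of_le_of_le_pi_div_two (by linarith [hx.1, pi_pos])
        (le_of_lt hy.2) hxy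
    have hDle : cos y ^ 2 + m ^ 2 * sin y ^ 2 ≤ cos x ^ 2 + m ^ 2 * sin x ^ 2 := by
      have hs2 : sin x ^ 2 ≤ sin y ^ 2 := by nlinarith
      nlinarith [sin_sq_add_cos_sq x, sin_sq_add_cos_sq y,
        mul_nonneg (by nlinarith : (0:ℝ) ≤ 1 - m ^ 2) (sub_nonneg.2 hs2)]
    exact div_le_div_of_nonneg_left (le_of_lt hm) (hDpos y) hDle
end

section
/- Define Δ(α, β) = (1/2)·sin(2α)·(1 − cot²α·cot²β). The function Δ is concave on the domain {(α, β) : 0 < α ≤ π/2, 0 < β ≤ π/2, α + β ≥ π/2}. -/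
open Real Set

private lemma comb_pos {wa wb x y : ℝ} (hwa : 0 ≤ wa) (hwb : 0 ≤ wb) (hab : wa + wb = 1)
    (hx : 0 < x) (hy : 0 < y) : 0 < wa * x + wb * y := by
  rcases eq_or_lt_of_le hwa with h | h
  · have hwb1 : wb = 1 := by linarith
    rw [← h, hwb1]; simpa using hy
  · nlinarith [mul_pos h hx, mul_nonneg hwb hy.le]

private lemma mem_Ioc_comb {x y t : ℝ} (hx : x ∈ Ioc 0 (π/2)) (hy : y ∈ Ioc 0 (π/2))
    (ht : t ∈ Icc (0:ℝ) 1) : x + t * (y - x) ∈ Ioc 0 (π/2) := by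
  have hrw : x + t * (y - x) = (1 - t) * x + t * y := by ring
  rw [hrw]
  constructor
  · exact comb_pos (by linarith [ht.2]) ht.1 (by ring) hx.1 hy.1
  · nlinarith [mul_le_mul_of_nonneg_left hx.2 (by linarith [ht.2] : (0:ℝ) ≤ 1 - t),
      mul_le_mul_of_nonneg_left hy.2 ht.1]

private lemma quad_nonpos (s1 c1 s2 c2 u v : ℝ) (hs1 : 0 < s1) (hs2 : 0 < s2)
    (hc1 : 0 ≤ c1) (hc2 : 0 ≤ c2) (h1 : s1^2 + c1^2 = 1) (h2 : s2^2 + c2^2 = 1) :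
    -4*s1*c1*u^2 - 2*u^2*c1*(3*s1^4+2*c1^2*s1^2+c1^4)*c2^2/(s1^3*s2^2) - 4*(u*v)*c2*(s2*s2+c2*c2)*(3*c1^2*s1^2+c1^4)/(s1^2*s2^3) - 2*v^2*c1^3*(s2*s2+c2*c2)*(s2^2+3*c2^2)/(s1*s2^4) ≤ 0 := by
  have hp2 : 0 < 2*s1^4+c2^2 := by positivity
  have hb : 0 ≤ (2*s1^4+c2^2)*s2^2*u^2 + 2*c2*c1*(1+2*s1^2)*s1*s2*(u*v) + c1^2*(1+2*c2^2)*s1^2*v^2 := by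
    nlinarith [sq_nonneg ((2*s1^4+c2^2)*s2*u + c2*c1*(1+2*s1^2)*s1*v),
      sq_nonneg (c1*(s1^2-c2^2)*s1*v), hp2]
  have hPid : -4*s1^4*c1*s2^4*u^2 - 2*u^2*c1*(3*s1^4+2*c1^2*s1^2+c1^4)*c2^2*s2^2 - 4*(u*v)*c2*(s2*s2+c2*c2)*(3*c1^2*s1^2+c1^4)*s1*s2 - 2*v^2*c1^3*(s2*s2+c2*c2)*(s2^2+3*c2^2)*s1^2
      = -2*c1*((2*s1^4+c2^2)*s2^2*u^2 + 2*c2*c1*(1+2*s1^2)*s1*s2*(u*v) + c1^2*(1+2*c2^2)*s1^2*v^2) := by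
    linear_combination ((-2)*c1*s2^2*c2^2*u^2 + (-2)*c1^3*s2^2*c2^2*u^2 + 4*s1*s2*c2*u*v + (-4)*s1*s2*c2^3*u*v + (-4)*s1*s2^3*c2*u*v + (-4)*s1*c1^2*s2*c2^3*u*v + (-4)*s1*c1^2*s2^3*c2*u*v + 2*s1^2*c1*v^2 + 4*s1^2*c1*c2^2*v^2 + (-6)*s1^2*c1*c2^4*v^2 + (-8)*s1^2*c1*s2^2*c2^2*v^2 + (-2)*s1^2*c1*s2^2*c2^2*u^2 + (-2)*s1^2*c1*s2^4*v^2 + 8*s1^3*s2*c2*u*v + (-8)*s1^3*s2*c2^3*u*v + (-8)*s1^3*s2^3*c2*u*v) * h1 + ((-4)*s1*s2*c2*u*v + (-2)*s1^2*c1*v^2 + (-6)*s1^2*c1*c2^2*v^2 + (-2)*s1^2*c1*s2^2*v^2 + (-4)*s1^3*s2*c2*u*v + 2*s1^4*c1*v^2 + 6*s1^4*c1*c2^2*v^2 + 2*s1^4*c1*s2^2*v^2 + (-4)*s1^4*c1*s2^2*u^2 + 8*s1^5*s2*c2*u*v) * h2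
  have hPle : -4*s1^4*c1*s2^4*u^2 - 2*u^2*c1*(3*s1^4+2*c1^2*s1^2+c1^4)*c2^2*s2^2 - 4*(u*v)*c2*(s2*s2+c2*c2)*(3*c1^2*s1^2+c1^4)*s1*s2 - 2*v^2*c1^3*(s2*s2+c2*c2)*(s2^2+3*c2^2)*s1^2 ≤ 0 := by
    rw [hPid]
    nlinarith [mul_nonneg hc1 hb]
  have hre : -4*s1*c1*u^2 - 2*u^2*c1*(3*s1^4+2*c1^2*s1^2+c1^4)*c2^2/(s1^3*s2^2) - 4*(u*v)*c2*(s2*s2+c2*c2)*(3*c1^2*s1^2+c1^4)/(s1^2*s2^3) - 2*v^2*c1^3*(s2*s2+c2*c2)*(s2^2+3*c2^2)/(s1*s2^4)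
      = (-4*s1^4*c1*s2^4*u^2 - 2*u^2*c1*(3*s1^4+2*c1^2*s1^2+c1^4)*c2^2*s2^2 - 4*(u*v)*c2*(s2*s2+c2*c2)*(3*c1^2*s1^2+c1^4)*s1*s2 - 2*v^2*c1^3*(s2*s2+c2*c2)*(s2^2+3*c2^2)*s1^2) / (s1^3*s2^4) := by
    field_simp
  rw [hre]
  exact div_nonpos_of_nonpos_of_nonneg hPle (by positivity)

private lemma hasDerivAt_G (a u b v t : ℝ) (hs1 : Real.sin (a+t*u) ≠ 0)
    (hs2 : Real.sin (b+t*v) ≠ 0) :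
    HasDerivAt (fun x : ℝ => Real.sin (a+x*u) * Real.cos (a+x*u) *
        (1 - (Real.cos (a+x*u)/Real.sin (a+x*u))^2 * (Real.cos (b+x*v)/Real.sin (b+x*v))^2))
      ((Real.cos (a+t*u)^2 - Real.sin (a+t*u)^2)*u + u*Real.cos (a+t*u)^2*(3*Real.sin (a+t*u)^2+Real.cos (a+t*u)^2)*Real.cos (b+t*v)^2/(Real.sin (a+t*u)^2*Real.sin (b+t*v)^2) + 2*v*Real.cos (a+t*u)^3*Real.cos (b+t*v)*(Real.sin (b+t*v)*Real.sin (b+t*v)+Real.cos (b+t*v)*Real.cos (b+t*v))/(Real.sin (a+t*u)*Real.sin (b+t*v)^3)) t := by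
  have hA : HasDerivAt (fun x : ℝ => a + x*u) u t := by
    simpa using ((hasDerivAt_id t).mul_const u).const_add a
  have hB : HasDerivAt (fun x : ℝ => b + x*v) v t := by
    simpa using ((hasDerivAt_id t).mul_const v).const_add b
  have h := (hA.sin.mul hA.cos).mul
    ((((hA.cos.div hA.sin hs1).pow 2).mul ((hB.cos.div hB.sin hs2).pow 2)).const_sub 1)
  refine h.congr_deriv ?_
  simp only [Pi.pow_apply, Pi.mul_apply, Pi.add_apply, Pi.sub_apply, Pi.div_apply, Nat.cast_ofNat, Nat.reduceSub, pow_one]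
  field_simp
  ring

private lemma hasDerivAt_G1 (a u b v t : ℝ) (hs1 : Real.sin (a+t*u) ≠ 0)
    (hs2 : Real.sin (b+t*v) ≠ 0) :
    HasDerivAt (fun x : ℝ => (Real.cos (a+x*u)^2 - Real.sin (a+x*u)^2)*u + u*Real.cos (a+x*u)^2*(3*Real.sin (a+x*u)^2+Real.cos (a+x*u)^2)*Real.cos (b+x*v)^2/(Real.sin (a+x*u)^2*Real.sin (b+x*v)^2) + 2*v*Real.cos (a+x*u)^3*Real.cos (b+x*v)*(Real.sin (b+x*v)*Real.sin (b+x*v)+Real.cos (b+x*v)*Real.cos (b+x*v))/(Real.sin (a+x*u)*Real.sin (b+x*v)^3))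
      (-4*Real.sin (a+t*u)*Real.cos (a+t*u)*u^2 - 2*u^2*Real.cos (a+t*u)*(3*Real.sin (a+t*u)^4+2*Real.cos (a+t*u)^2*Real.sin (a+t*u)^2+Real.cos (a+t*u)^4)*Real.cos (b+t*v)^2/(Real.sin (a+t*u)^3*Real.sin (b+t*v)^2) - 4*(u*v)*Real.cos (b+t*v)*(Real.sin (b+t*v)*Real.sin (b+t*v)+Real.cos (b+t*v)*Real.cos (b+t*v))*(3*Real.cos (a+t*u)^2*Real.sin (a+t*u)^2+Real.cos (a+t*u)^4)/(Real.sin (a+t*u)^2*Real.sin (b+t*v)^3) - 2*v^2*Real.cos (a+t*u)^3*(Real.sin (b+t*v)*Real.sin (b+t*v)+Real.cos (b+t*v)*Real.cos (b+t*v))*(Real.sin (b+t*v)^2+3*Real.cos (b+t*v)^2)/(Real.sin (a+t*u)*Real.sin (b+t*v)^4)) t := by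
  have hA : HasDerivAt (fun x : ℝ => a + x*u) u t := by
    simpa using ((hasDerivAt_id t).mul_const u).const_add a
  have hB : HasDerivAt (fun x : ℝ => b + x*v) v t := by
    simpa using ((hasDerivAt_id t).mul_const v).const_add b
  have hT1 := ((hA.cos.pow 2).sub (hA.sin.pow 2)).mul_const u
  have hnum2 := ((((hA.cos.pow 2).mul (((hA.sin.pow 2).const_mul 3).add (hA.cos.pow 2))).mul
      (hB.cos.pow 2)).const_mul u)
  have hden2 := (hA.sin.pow 2).mul (hB.sin.pow 2)
  have hT2 := hnum2.div hden2 (mul_ne_zero (pow_ne_zero 2 hs1) (pow_ne_zero 2 hs2))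
  have hnum3 := (((hA.cos.pow 3).mul hB.cos).mul
      ((hB.sin.mul hB.sin).add (hB.cos.mul hB.cos))).const_mul (2*v)
  have hden3 := hA.sin.mul (hB.sin.pow 3)
  have hT3 := hnum3.div hden3 (mul_ne_zero hs1 (pow_ne_zero 3 hs2))
  have h := (hT1.add hT2).add hT3
  refine (h.congr_deriv ?_).congr_of_eventuallyEq (Filter.Eventually.of_forall fun x => ?_)
  · simp only [Pi.pow_apply, Pi.mul_apply, Pi.add_apply, Pi.sub_apply, Pi.div_apply, Nat.cast_ofNat, Nat.reduceSub, pow_one]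
    field_simp
    ring
  · simp only [Pi.pow_apply, Pi.mul_apply, Pi.add_apply, Pi.sub_apply, Pi.div_apply, Nat.cast_ofNat, Nat.reduceSub, pow_one]
    ring

private lemma seg_concave (a b u v : ℝ)
    (hPa : ∀ t ∈ Icc (0:ℝ) 1, a + t*u ∈ Ioc 0 (π/2))
    (hQa : ∀ t ∈ Icc (0:ℝ) 1, b + t*v ∈ Ioc 0 (π/2)) :
    ConcaveOn ℝ (Icc (0:ℝ) 1) (fun x : ℝ =>
      (1/2) * Real.sin (2*(a+x*u)) *
        (1 - (Real.cos (a+x*u)/Real.sin (a+x*u))^2 * (Real.cos (b+x*v)/Real.sin (b+x*v))^2)) := by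
  have hfun : (fun x : ℝ => (1/2) * Real.sin (2*(a+x*u)) *
        (1 - (Real.cos (a+x*u)/Real.sin (a+x*u))^2 * (Real.cos (b+x*v)/Real.sin (b+x*v))^2))
      = (fun x : ℝ => Real.sin (a+x*u) * Real.cos (a+x*u) *
        (1 - (Real.cos (a+x*u)/Real.sin (a+x*u))^2 * (Real.cos (b+x*v)/Real.sin (b+x*v))^2)) := by
    funext x
    rw [Real.sin_two_mul]
    ring
  rw [hfun]
  have hpi : π/2 < π := by linarith [Real.pi_pos]
  have hs1 : ∀ t ∈ Icc (0:ℝ) 1, 0 < Real.sin (a+t*u) := fun t ht =>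
    Real.sin_pos_of_pos_of_lt_pi (hPa t ht).1 (lt_of_le_of_lt (hPa t ht).2 hpi)
  have hs2 : ∀ t ∈ Icc (0:ℝ) 1, 0 < Real.sin (b+t*v) := fun t ht =>
    Real.sin_pos_of_pos_of_lt_pi (hQa t ht).1 (lt_of_le_of_lt (hQa t ht).2 hpi)
  have hc1 : ∀ t ∈ Icc (0:ℝ) 1, 0 ≤ Real.cos (a+t*u) := fun t ht =>
    Real.cos_nonneg_of_mem_Icc ⟨by linarith [(hPa t ht).1, Real.pi_pos], (hPa t ht).2⟩
  have hc2 : ∀ t ∈ Icc (0:ℝ) 1, 0 ≤ Real.cos (b+t*v) := fun t ht =>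
    Real.cos_nonneg_of_mem_Icc ⟨by linarith [(hQa t ht).1, Real.pi_pos], (hQa t ht).2⟩
  refine concaveOn_of_hasDerivWithinAt2_nonpos (convex_Icc 0 1)
    (f' := fun t : ℝ => (Real.cos (a+t*u)^2 - Real.sin (a+t*u)^2)*u + u*Real.cos (a+t*u)^2*(3*Real.sin (a+t*u)^2+Real.cos (a+t*u)^2)*Real.cos (b+t*v)^2/(Real.sin (a+t*u)^2*Real.sin (b+t*v)^2) + 2*v*Real.cos (a+t*u)^3*Real.cos (b+t*v)*(Real.sin (b+t*v)*Real.sin (b+t*v)+Real.cos (b+t*v)*Real.cos (b+t*v))/(Real.sin (a+t*u)*Real.sin (b+t*v)^3))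
    (f'' := fun t : ℝ => -4*Real.sin (a+t*u)*Real.cos (a+t*u)*u^2 - 2*u^2*Real.cos (a+t*u)*(3*Real.sin (a+t*u)^4+2*Real.cos (a+t*u)^2*Real.sin (a+t*u)^2+Real.cos (a+t*u)^4)*Real.cos (b+t*v)^2/(Real.sin (a+t*u)^3*Real.sin (b+t*v)^2) - 4*(u*v)*Real.cos (b+t*v)*(Real.sin (b+t*v)*Real.sin (b+t*v)+Real.cos (b+t*v)*Real.cos (b+t*v))*(3*Real.cos (a+t*u)^2*Real.sin (a+t*u)^2+Real.cos (a+t*u)^4)/(Real.sin (a+t*u)^2*Real.sin (b+t*v)^3) - 2*v^2*Real.cos (a+t*u)^3*(Real.sin (b+t*v)*Real.sin (b+t*v)+Real.cos (b+t*v)*Real.cos (b+t*v))*(Real.sin (b+t*v)^2+3*Real.cos (b+t*v)^2)/(Real.sin (a+t*u)*Real.sin (b+t*v)^4))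
    (fun t ht => (hasDerivAt_G a u b v t (hs1 t ht).ne' (hs2 t ht).ne').continuousAt.continuousWithinAt)
    ?_ ?_ ?_
  · intro t ht
    rw [interior_Icc] at ht
    exact (hasDerivAt_G a u b v t (hs1 t (Ioo_subset_Icc_self ht)).ne'
      (hs2 t (Ioo_subset_Icc_self ht)).ne').hasDerivWithinAt
  · intro t ht
    rw [interior_Icc] at ht
    exact (hasDerivAt_G1 a u b v t (hs1 t (Ioo_subset_Icc_self ht)).ne'
      (hs2 t (Ioo_subset_Icc_self ht)).ne').hasDerivWithinAt
  · intro t ht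
    rw [interior_Icc] at ht
    have ht' := Ioo_subset_Icc_self ht
    exact quad_nonpos _ _ _ _ u v (hs1 t ht') (hs2 t ht') (hc1 t ht') (hc2 t ht')
      (Real.sin_sq_add_cos_sq _) (Real.sin_sq_add_cos_sq _)

theorem stmt_4 :
    ConcaveOn ℝ
      {p : ℝ × ℝ | 0 < p.1 ∧ p.1 ≤ π / 2 ∧ 0 < p.2 ∧ p.2 ≤ π / 2 ∧ π / 2 ≤ p.1 + p.2}
      (fun p : ℝ × ℝ =>
        (1 / 2) * Real.sin (2 * p.1) *
          (1 - (Real.cos p.1 / Real.sin p.1) ^ 2 * (Real.cos p.2 / Real.sin p.2) ^ 2)) := by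
  constructor
  · intro p hp q hq wa wb hwa hwb hab
    obtain ⟨hp1, hp2, hp3, hp4, hp5⟩ := hp
    obtain ⟨hq1, hq2, hq3, hq4, hq5⟩ := hq
    refine ⟨?_, ?_, ?_, ?_, ?_⟩ <;>
      simp only [Prod.fst_add, Prod.snd_add, Prod.smul_fst, Prod.smul_snd, smul_eq_mul]
    · exact comb_pos hwa hwb hab hp1 hq1
    · nlinarith [mul_le_mul_of_nonneg_left hp2 hwa, mul_le_mul_of_nonneg_left hq2 hwb]
    · exact comb_pos hwa hwb hab hp3 hq3
    · nlinarith [mul_le_mul_of_nonneg_left hp4 hwa, mul_le_mul_of_nonneg_left hq4 hwb]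
    · nlinarith [mul_le_mul_of_nonneg_left hp5 hwa, mul_le_mul_of_nonneg_left hq5 hwb]
  · intro p hp q hq wa wb hwa hwb hab
    obtain ⟨hp1, hp2, hp3, hp4, hp5⟩ := hp
    obtain ⟨hq1, hq2, hq3, hq4, hq5⟩ := hq
    have hseg := seg_concave p.1 p.2 (q.1 - p.1) (q.2 - p.2)
      (fun t ht => mem_Ioc_comb ⟨hp1, hp2⟩ ⟨hq1, hq2⟩ ht)
      (fun t ht => mem_Ioc_comb ⟨hp3, hp4⟩ ⟨hq3, hq4⟩ ht)
    have key := hseg.2 (left_mem_Icc.mpr zero_le_one) (right_mem_Icc.mpr zero_le_one)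
      hwa hwb hab
    simp only [smul_eq_mul, mul_zero, mul_one, zero_add, zero_mul, add_zero, one_mul] at key
    rw [show p.1 + (q.1 - p.1) = q.1 from by ring,
        show p.2 + (q.2 - p.2) = q.2 from by ring,
        show p.1 + wb * (q.1 - p.1) = wa * p.1 + wb * q.1 from by linear_combination (-p.1) * hab,
        show p.2 + wb * (q.2 - p.2) = wa * p.2 + wb * q.2 from by linear_combination (-p.2) * hab] at key
    simpa only [Prod.fst_add, Prod.snd_add, Prod.smul_fst, Prod.smul_snd, smul_eq_mul] using key
end

section
/- For fixed y with 0 < y < 2, define v(y, x) = (y²/12)·√(sin²x − y²/4)/(1 + cos x) for x in the interval (arcsin(y/2), π − arcsin(y/2)). Then v(y, ·) attains its maximum at x₀ = arccos(y²/4 − 1), and the maximal value is v(y, x₀) = (y/6)·√(1 − y²/4). -/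
open Real

theorem stmt_5 (y : ℝ) (hy0 : 0 < y) (hy2 : y < 2) :
    IsMaxOn (fun x : ℝ => (y ^ 2 / 12) * Real.sqrt (Real.sin x ^ 2 - y ^ 2 / 4) / (1 + Real.cos x))
      (Set.Ioo (Real.arcsin (y / 2)) (π - Real.arcsin (y / 2)))
      (Real.arccos (y ^ 2 / 4 - 1)) ∧
    (y ^ 2 / 12) * Real.sqrt (Real.sin (Real.arccos (y ^ 2 / 4 - 1)) ^ 2 - y ^ 2 / 4) /
        (1 + Real.cos (Real.arccos (y ^ 2 / 4 - 1))) =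
      (y / 6) * Real.sqrt (1 - y ^ 2 / 4) := by
  have ha0 : 0 < y ^ 2 / 4 := by positivity
  have ha1 : y ^ 2 / 4 < 1 := by nlinarith
  have hcos : Real.cos (Real.arccos (y ^ 2 / 4 - 1)) = y ^ 2 / 4 - 1 :=
    Real.cos_arccos (by linarith) (by linarith)
  have hsin : Real.sin (Real.arccos (y ^ 2 / 4 - 1)) ^ 2 = 1 - (y ^ 2 / 4 - 1) ^ 2 := by
    have h := Real.sin_sq_add_cos_sq (Real.arccos (y ^ 2 / 4 - 1))
    nlinarith [h, hcos]
  have hval : (y ^ 2 / 12) * Real.sqrt (Real.sin (Real.arccos (y ^ 2 / 4 - 1)) ^ 2 - y ^ 2 / 4) /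
        (1 + Real.cos (Real.arccos (y ^ 2 / 4 - 1))) = (y / 6) * Real.sqrt (1 - y ^ 2 / 4) := by
    rw [hcos, hsin]
    have h1 : 1 - (y ^ 2 / 4 - 1) ^ 2 - y ^ 2 / 4 = (y / 2) ^ 2 * (1 - y ^ 2 / 4) := by ring
    rw [h1, Real.sqrt_mul (by positivity), Real.sqrt_sq (by positivity)]
    field_simp
    ring
  refine ⟨?_, hval⟩
  intro x hx
  simp only [Set.mem_setOf_eq, hval]
  obtain ⟨hx1, hx2⟩ := hx
  have hy21 : y / 2 ≤ 1 := by linarith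
  have hx0 : 0 < x := lt_trans (Real.arcsin_pos.mpr (by linarith)) hx1
  have hxpi : x < π := lt_of_lt_of_le hx2 (by
    have := Real.arcsin_nonneg.mpr (by linarith : (0:ℝ) ≤ y / 2)
    linarith)
  have hc1 : -1 < Real.cos x := by
    have := Real.strictAntiOn_cos (Set.mem_Icc.mpr ⟨le_of_lt hx0, le_of_lt hxpi⟩)
      (Set.mem_Icc.mpr ⟨Real.pi_nonneg, le_refl π⟩) hxpi
    simpa [Real.cos_pi] using this
  have h1c : 0 < 1 + Real.cos x := by linarith
  set c := Real.cos x with hc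
  set a := y ^ 2 / 4 with hadef
  have hsinx : Real.sin x ^ 2 = 1 - c ^ 2 := by
    have h := Real.sin_sq_add_cos_sq x
    nlinarith [h]
  rw [hsinx]
  set u := Real.sqrt (1 - a) with hu
  have hu0 : 0 ≤ u := Real.sqrt_nonneg _
  have hu2 : u ^ 2 = 1 - a := Real.sq_sqrt (by linarith)
  rcases le_or_gt (1 - c ^ 2 - a) 0 with hneg | hpos
  · have hz : Real.sqrt (1 - c ^ 2 - a) = 0 := Real.sqrt_eq_zero_of_nonpos hneg
    rw [hz]
    have h0 : y ^ 2 / 12 * (0:ℝ) / (1 + c) = 0 := by ring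
    rw [h0]
    exact mul_nonneg (by linarith) hu0
  · set s := Real.sqrt (1 - c ^ 2 - a) with hs
    have hs0 : 0 ≤ s := Real.sqrt_nonneg _
    have hs2 : s ^ 2 = 1 - c ^ 2 - a := Real.sq_sqrt (le_of_lt hpos)
    have hkey : (y / 2 * s) ^ 2 ≤ (u * (1 + c)) ^ 2 := by
      have h : a * (1 - c ^ 2 - a) ≤ (1 - a) * (1 + c) ^ 2 := by
        nlinarith [sq_nonneg (1 + c - a)]
      calc (y / 2 * s) ^ 2 = a * (1 - c ^ 2 - a) := by rw [mul_pow, hs2, hadef]; ring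
        _ ≤ (1 - a) * (1 + c) ^ 2 := h
        _ = (u * (1 + c)) ^ 2 := by rw [mul_pow, hu2]
    have hle : y / 2 * s ≤ u * (1 + c) := by
      have h1 : y / 2 * s = Real.sqrt ((y / 2 * s) ^ 2) := by
        rw [Real.sqrt_sq (by positivity)]
      have h2 : Real.sqrt ((u * (1 + c)) ^ 2) = u * (1 + c) := by
        rw [Real.sqrt_sq (by positivity)]
      rw [h1, ← h2]
      exact Real.sqrt_le_sqrt hkey
    rw [div_le_iff₀ h1c]
    calc y ^ 2 / 12 * s = y / 6 * (y / 2 * s) := by ring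
      _ ≤ y / 6 * (u * (1 + c)) := mul_le_mul_of_nonneg_left hle (by linarith)
      _ = y / 6 * u * (1 + c) := by ring
end

section
/- For fixed y with 0 < y < 2, the function x ↦ (y²/12)·√(sin²x − y²/4)/(1 + cos x) is strictly increasing on (arcsin(y/2), arccos(y²/4 − 1)) and strictly decreasing on (arccos(y²/4 − 1), π − arcsin(y/2)). -/
set_option maxHeartbeats 1000000


open Real

private lemma aux_sqrt_div (c u₁ u₂ a₁ a₂ : ℝ) (hc : 0 < c) (ha₁ : 0 < a₁)
    (ha₂ : 0 < a₂) (hu₁ : 0 ≤ u₁) (hu₂ : 0 ≤ u₂) (h : u₁ * a₂ ^ 2 < u₂ * a₁ ^ 2) :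
    c * Real.sqrt u₁ / a₁ < c * Real.sqrt u₂ / a₂ := by
  rw [div_lt_div_iff₀ ha₁ ha₂]
  have h' : Real.sqrt u₁ * a₂ < Real.sqrt u₂ * a₁ := by
    apply lt_of_pow_lt_pow_left₀ 2 (by positivity)
    rw [mul_pow, mul_pow, Real.sq_sqrt hu₁, Real.sq_sqrt hu₂]
    linarith
  nlinarith [mul_lt_mul_of_pos_left h' hc]

theorem stmt_6 (y : ℝ) (hy0 : 0 < y) (hy2 : y < 2) :
    StrictMonoOn
      (fun x : ℝ => (y ^ 2 / 12) * Real.sqrt (Real.sin x ^ 2 - y ^ 2 / 4) / (1 + Real.cos x))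
      (Set.Ioo (Real.arcsin (y / 2)) (Real.arccos (y ^ 2 / 4 - 1))) ∧
    StrictAntiOn
      (fun x : ℝ => (y ^ 2 / 12) * Real.sqrt (Real.sin x ^ 2 - y ^ 2 / 4) / (1 + Real.cos x))
      (Set.Ioo (Real.arccos (y ^ 2 / 4 - 1)) (π - Real.arcsin (y / 2))) := by
  have hπ : 0 < π := Real.pi_pos
  set s := Real.sqrt (1 - (y / 2) ^ 2) with hsdef
  have hs2 : s ^ 2 = 1 - (y / 2) ^ 2 := Real.sq_sqrt (by nlinarith)
  have hs0 : 0 < s := Real.sqrt_pos.mpr (by nlinarith)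
  have hs1 : s < 1 := by nlinarith
  -- key: k - 1 > -s where k = y^2/4
  have hks : -s < y ^ 2 / 4 - 1 := by nlinarith
  have hk1 : y ^ 2 / 4 < 1 := by nlinarith
  have hk0 : 0 < y ^ 2 / 4 := by positivity
  have ha0 : 0 < Real.arcsin (y / 2) := Real.arcsin_pos.mpr (by linarith)
  have hale : Real.arcsin (y / 2) ≤ π / 2 := Real.arcsin_le_pi_div_two _
  have hcs : Real.cos (Real.arcsin (y / 2)) = s := Real.cos_arcsin _
  have hacos : Real.cos (Real.arccos (y ^ 2 / 4 - 1)) = y ^ 2 / 4 - 1 :=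
    Real.cos_arccos (by nlinarith) (by nlinarith)
  have hacos_pos : 0 < Real.arccos (y ^ 2 / 4 - 1) := Real.arccos_pos.mpr (by linarith)
  have hacos_lt : Real.arccos (y ^ 2 / 4 - 1) < π := by
    rw [Real.arccos_eq_pi_div_two_sub_arcsin]
    have := Real.neg_pi_div_two_lt_arcsin.mpr (show (-1:ℝ) < y ^ 2 / 4 - 1 by linarith)
    linarith
  have hcps : Real.cos (π - Real.arcsin (y / 2)) = -s := by
    rw [Real.cos_pi_sub, hcs]
  have hmem_arcsin : Real.arcsin (y / 2) ∈ Set.Icc 0 π := ⟨le_of_lt ha0, by linarith⟩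
  have hmem_arccos : Real.arccos (y ^ 2 / 4 - 1) ∈ Set.Icc 0 π :=
    ⟨le_of_lt hacos_pos, le_of_lt hacos_lt⟩
  have hmem_pisub : π - Real.arcsin (y / 2) ∈ Set.Icc 0 π := ⟨by linarith, by linarith⟩
  -- u = sin x ^ 2 - y^2/4 rewritten via cos
  have hu_eq : ∀ x : ℝ, Real.sin x ^ 2 - y ^ 2 / 4 = 1 - Real.cos x ^ 2 - y ^ 2 / 4 := by
    intro x; rw [Real.sin_sq]
  constructor
  · -- increasing part
    intro x₁ hx₁ x₂ hx₂ hlt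
    obtain ⟨h1l, h1r⟩ := hx₁
    obtain ⟨h2l, h2r⟩ := hx₂
    have hx₁mem : x₁ ∈ Set.Icc 0 π := ⟨by linarith, by linarith⟩
    have hx₂mem : x₂ ∈ Set.Icc 0 π := ⟨by linarith, by linarith⟩
    have ht : Real.cos x₂ < Real.cos x₁ :=
      Real.strictAntiOn_cos hx₁mem hx₂mem hlt
    have ht1 : Real.cos x₁ < s := by
      have := Real.strictAntiOn_cos hmem_arcsin hx₁mem h1l
      rwa [hcs] at this
    have ht2 : y ^ 2 / 4 - 1 < Real.cos x₂ := by
      have := Real.strictAntiOn_cos hx₂mem hmem_arccos h2r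
      rwa [hacos] at this
    set t₁ := Real.cos x₁
    set t₂ := Real.cos x₂
    have ht2' : -1 < t₂ := by linarith
    have hu₁ : 0 < Real.sin x₁ ^ 2 - y ^ 2 / 4 := by
      rw [hu_eq]; nlinarith
    have hu₂ : 0 < Real.sin x₂ ^ 2 - y ^ 2 / 4 := by
      rw [hu_eq]; nlinarith
    simp only []
    apply aux_sqrt_div _ _ _ _ _ (by positivity) (by linarith) (by linarith) hu₁.le hu₂.le
    rw [hu_eq, hu_eq]
    have hB : 0 < (1 + t₂) * (t₁ - (y ^ 2 / 4 - 1)) + (1 + t₁) * (t₂ - (y ^ 2 / 4 - 1)) := by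
      have := mul_pos (show (0:ℝ) < 1 + t₂ by linarith) (show (0:ℝ) < t₁ - (y ^ 2 / 4 - 1) by linarith)
      have := mul_pos (show (0:ℝ) < 1 + t₁ by linarith) (show (0:ℝ) < t₂ - (y ^ 2 / 4 - 1) by linarith)
      linarith
    nlinarith [mul_pos (show (0:ℝ) < t₁ - t₂ by linarith) hB]
  · -- decreasing part
    intro x₁ hx₁ x₂ hx₂ hlt
    obtain ⟨h1l, h1r⟩ := hx₁
    obtain ⟨h2l, h2r⟩ := hx₂
    have hx₁mem : x₁ ∈ Set.Icc 0 π := ⟨by linarith, by linarith⟩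
    have hx₂mem : x₂ ∈ Set.Icc 0 π := ⟨by linarith, by linarith⟩
    have ht : Real.cos x₂ < Real.cos x₁ :=
      Real.strictAntiOn_cos hx₁mem hx₂mem hlt
    have ht1 : Real.cos x₁ < y ^ 2 / 4 - 1 := by
      have := Real.strictAntiOn_cos hmem_arccos hx₁mem h1l
      rwa [hacos] at this
    have ht2 : -s < Real.cos x₂ := by
      have := Real.strictAntiOn_cos hx₂mem hmem_pisub h2r
      rwa [hcps] at this
    set t₁ := Real.cos x₁
    set t₂ := Real.cos x₂
    have ht2' : -1 < t₂ := by linarith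
    have hu₁ : 0 < Real.sin x₁ ^ 2 - y ^ 2 / 4 := by
      rw [hu_eq]; nlinarith
    have hu₂ : 0 < Real.sin x₂ ^ 2 - y ^ 2 / 4 := by
      rw [hu_eq]; nlinarith
    simp only []
    apply aux_sqrt_div _ _ _ _ _ (by positivity) (by linarith) (by linarith) hu₂.le hu₁.le
    rw [hu_eq, hu_eq]
    have hB : (1 + t₂) * (t₁ - (y ^ 2 / 4 - 1)) + (1 + t₁) * (t₂ - (y ^ 2 / 4 - 1)) < 0 := by
      have := mul_pos (show (0:ℝ) < 1 + t₂ by linarith) (show (0:ℝ) < (y ^ 2 / 4 - 1) - t₁ by linarith)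
      have := mul_pos (show (0:ℝ) < 1 + t₁ by linarith) (show (0:ℝ) < (y ^ 2 / 4 - 1) - t₂ by linarith)
      nlinarith
    nlinarith [mul_pos (show (0:ℝ) < t₁ - t₂ by linarith) (show (0:ℝ) < -((1 + t₂) * (t₁ - (y ^ 2 / 4 - 1)) + (1 + t₁) * (t₂ - (y ^ 2 / 4 - 1))) by linarith)]
end

section
/- For 0 < c < π/2, the inequality tan(c/4)·√(tan(3c/4)·tan(c/4)) < tan(c/4) holds; equivalently, tan(3c/4)·tan(c/4) < 1. Consequently, if τ ∈ (0, 2π) satisfies tan(τ/4) = tan(c/4)·√(tan(3c/4)·tan(c/4)) (the area relation for an equilateral spherical triangle of side c), then τ < c. -/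
open Real

theorem stmt_11 (c : ℝ) (hc0 : 0 < c) (hcπ : c < π / 2) :
    Real.tan (c / 4) * Real.sqrt (Real.tan (3 * c / 4) * Real.tan (c / 4)) < Real.tan (c / 4) ∧
    Real.tan (3 * c / 4) * Real.tan (c / 4) < 1 ∧
    ∀ τ : ℝ, τ ∈ Set.Ioo 0 (2 * π) →
      Real.tan (τ / 4) = Real.tan (c / 4) * Real.sqrt (Real.tan (3 * c / 4) * Real.tan (c / 4)) →
      τ < c := by
  have hpi := Real.pi_pos
  have h1lt : 3 * c / 4 < π / 2 := by linarith
  have h1pos : 0 < 3 * c / 4 := by linarith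
  have h2lt : c / 4 < π / 2 := by linarith
  have h2pos : 0 < c / 4 := by linarith
  have hcos1 : 0 < Real.cos (3 * c / 4) := Real.cos_pos_of_mem_Ioo ⟨by linarith, h1lt⟩
  have hcos2 : 0 < Real.cos (c / 4) := Real.cos_pos_of_mem_Ioo ⟨by linarith, h2lt⟩
  have hcosc : 0 < Real.cos c := Real.cos_pos_of_mem_Ioo ⟨by linarith, hcπ⟩
  have htan1 : 0 < Real.tan (3 * c / 4) := Real.tan_pos_of_pos_of_lt_pi_div_two h1pos h1lt
  have htan2 : 0 < Real.tan (c / 4) := Real.tan_pos_of_pos_of_lt_pi_div_two h2pos h2lt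
  have hkey : Real.tan (3 * c / 4) * Real.tan (c / 4) < 1 := by
    rw [Real.tan_eq_sin_div_cos, Real.tan_eq_sin_div_cos, div_mul_div_comm,
      div_lt_one (by positivity)]
    have hadd : Real.cos (3 * c / 4 + c / 4) = Real.cos c := by ring_nf
    rw [Real.cos_add] at hadd
    nlinarith
  have hsqrt : Real.sqrt (Real.tan (3 * c / 4) * Real.tan (c / 4)) < 1 := by
    rw [show (1:ℝ) = Real.sqrt 1 by simp]
    exact Real.sqrt_lt_sqrt (by positivity) hkey
  have hfirst : Real.tan (c / 4) * Real.sqrt (Real.tan (3 * c / 4) * Real.tan (c / 4)) <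
      Real.tan (c / 4) := by
    nlinarith [Real.sqrt_nonneg (Real.tan (3 * c / 4) * Real.tan (c / 4))]
  refine ⟨hfirst, hkey, ?_⟩
  rintro τ ⟨hτ0, hτ2π⟩ heq
  by_contra h
  push_neg at h
  have : Real.tan (c / 4) ≤ Real.tan (τ / 4) := by
    rcases eq_or_lt_of_le h with h' | h'
    · rw [h']
    · exact le_of_lt (Real.tan_lt_tan_of_lt_of_lt_pi_div_two (by linarith) (by linarith)
        (by linarith))
  linarith [heq ▸ this]
end

section
/- Let x₁, x₂, x₃, x₄, x₅ be nonnegative reals with x₁ + x₂ + x₃ + x₄ + x₅ ≤ π/2. Then sin(x₁)/(√3 − cos x₁) + sin(x₂)/(√3 − cos x₂) + sin(x₃)/(√3 − cos x₃) + sin(x₄)/(√3 − cos x₄) + sin(x₅)/(√3 − cos x₅) < 2. -/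
open Real

lemma sqrt3_ge : (1.7320508 : ℝ) ≤ Real.sqrt 3 := by
  rw [show (1.7320508 : ℝ) = Real.sqrt (1.7320508^2) by
    rw [Real.sqrt_sq (by norm_num)]]
  exact Real.sqrt_le_sqrt (by norm_num)

lemma key (x : ℝ) (hx : 0 ≤ x) (hx2 : x ≤ π / 2) :
    Real.sin x / (Real.sqrt 3 - Real.cos x) ≤ 213/200 * x + 633/10000 := by
  have hs := sqrt3_ge
  have hden : 0 < Real.sqrt 3 - Real.cos x := by
    have := Real.cos_le_one x; linarith
  rw [div_le_iff₀ hden]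
  rcases le_or_gt x 1 with hx1 | hx1
  · have habs : |x| ≤ 1 := by rw [abs_of_nonneg hx]; exact hx1
    have hsin := le_of_abs_le (Real.sin_bound habs)
    have hcos := le_of_abs_le (Real.cos_bound habs)
    rw [abs_of_nonneg hx] at hsin hcos
    -- sin x ≤ x - x^3/6 + x^4*(5/96), cos x ≤ 1 - x^2/2 + x^4*(5/96)
    have hlin : (0:ℝ) ≤ 213/200 * x + 633/10000 := by positivity
    nlinarith [mul_nonneg hlin (sub_nonneg.2 (le_of_abs_le (Real.cos_bound habs) |>.trans_eq' rfl) |> fun _ => le_refl (0:ℝ)), sq_nonneg (x - 317/1000), sq_nonneg x, mul_nonneg hlin (sq_nonneg x), mul_nonneg (mul_nonneg hlin hx) hx, sq_nonneg (x - 317/1000) |> fun h => mul_nonneg h hx, mul_nonneg (mul_nonneg (sq_nonneg (x - 317/1000)) hx) hx, mul_nonneg hx (sub_nonneg.2 hx1), hcos, hsin]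
  · have hsin : Real.sin x ≤ 1 := Real.sin_le_one x
    have hcos : Real.cos x ≤ 2/3 := by
      calc Real.cos x ≤ Real.cos 1 :=
            Real.cos_le_cos_of_nonneg_of_le_pi (by norm_num)
              (by linarith [Real.pi_gt_three]) hx1.le
        _ ≤ 2/3 := Real.cos_one_le.trans (by norm_num)
    nlinarith [hx1.le]

theorem stmt_13 (x₁ x₂ x₃ x₄ x₅ : ℝ) (h1 : 0 ≤ x₁) (h2 : 0 ≤ x₂) (h3 : 0 ≤ x₃)
    (h4 : 0 ≤ x₄) (h5 : 0 ≤ x₅) (hsum : x₁ + x₂ + x₃ + x₄ + x₅ ≤ π / 2) :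
    Real.sin x₁ / (Real.sqrt 3 - Real.cos x₁) + Real.sin x₂ / (Real.sqrt 3 - Real.cos x₂) +
      Real.sin x₃ / (Real.sqrt 3 - Real.cos x₃) + Real.sin x₄ / (Real.sqrt 3 - Real.cos x₄) +
      Real.sin x₅ / (Real.sqrt 3 - Real.cos x₅) < 2 := by
  have k1 := key x₁ h1 (by linarith)
  have k2 := key x₂ h2 (by linarith)
  have k3 := key x₃ h3 (by linarith)
  have k4 := key x₄ h4 (by linarith)
  have k5 := key x₅ h5 (by linarith)
  have hpi := Real.pi_lt_d2
  linarith
end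

section
/- Let α_A, α_B ∈ (0, π/2) with α_A + α_B < π/2, and let 0 < m < 1. Then the volume of the tetrahedron with apex at the center O of the unit sphere over a triangle ABC inscribed in the sphere, with altitude m, obtuse angle at C, and central angles α_A, α_B of the sides BC, AC, equals v(α_A, α_B) = (m(1 − m²)/6)·(sin 2α_A + sin 2α_B − sin 2(α_A + α_B)), and this quantity is positive. -/
open Real EuclideanGeometry MeasureTheory Set

noncomputable section SimplexVol

private lemma tri_vol' {c : ℝ} (hc : 0 ≤ c) :
    volume {q : ℝ × ℝ | 0 ≤ q.1 ∧ 0 ≤ q.2 ∧ q.1 + q.2 ≤ c} = ENNReal.ofReal (c ^ 2 / 2) := by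
  have hmeas : MeasurableSet {q : ℝ × ℝ | 0 ≤ q.1 ∧ 0 ≤ q.2 ∧ q.1 + q.2 ≤ c} := by
    apply MeasurableSet.inter
    · exact measurableSet_le measurable_const measurable_fst
    exact (measurableSet_le measurable_const measurable_snd).inter
      (measurableSet_le (measurable_fst.add measurable_snd) measurable_const)
  rw [Measure.volume_eq_prod, Measure.prod_apply hmeas]
  have hslice : ∀ y : ℝ, (Prod.mk y ⁻¹' {q : ℝ × ℝ | 0 ≤ q.1 ∧ 0 ≤ q.2 ∧ q.1 + q.2 ≤ c}) =
      if y ∈ Icc 0 c then Icc 0 (c - y) else ∅ := by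
    intro y
    split_ifs with h
    · ext z; simp only [mem_preimage, mem_setOf_eq, mem_Icc]
      constructor
      · rintro ⟨_, h2, h3⟩; exact ⟨h2, by linarith⟩
      · rintro ⟨h2, h3⟩; exact ⟨h.1, h2, by linarith⟩
    · ext z; simp only [mem_preimage, mem_setOf_eq, mem_empty_iff_false, iff_false]
      rintro ⟨h1, h2, h3⟩
      simp only [mem_Icc, not_and_or, not_le] at h
      rcases h with h | h
      · linarith
      · linarith
  have hind : ∀ y : ℝ, volume (Prod.mk y ⁻¹' {q : ℝ × ℝ | 0 ≤ q.1 ∧ 0 ≤ q.2 ∧ q.1 + q.2 ≤ c}) =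
      Set.indicator (Icc 0 c) (fun y => ENNReal.ofReal (c - y)) y := by
    intro y
    rw [hslice y]
    by_cases h : y ∈ Icc 0 c
    · simp [h, Real.volume_Icc]
    · simp [h]
  rw [lintegral_congr hind, lintegral_indicator measurableSet_Icc]
  rw [← ofReal_integral_eq_lintegral_ofReal]
  · congr 1
    rw [integral_Icc_eq_integral_Ioc, ← intervalIntegral.integral_of_le hc]
    have : ∫ y in (0:ℝ)..c, (c - y) = c * c - c ^ 2 / 2 := by
      have h1 : ∫ y in (0:ℝ)..c, (c - y) = (∫ _ in (0:ℝ)..c, c) - ∫ y in (0:ℝ)..c, y :=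
        intervalIntegral.integral_sub intervalIntegrable_const
          (continuous_id.intervalIntegrable 0 c)
      rw [h1]
      simp [integral_id]
    rw [this]; ring
  · exact (Continuous.integrableOn_Icc (by continuity))
  · filter_upwards [ae_restrict_mem measurableSet_Icc] with y hy
    simp only [mem_Icc, Pi.zero_apply] at hy ⊢; linarith [hy.2]

private lemma simplex3_vol' :
    volume {p : ℝ × ℝ × ℝ | 0 ≤ p.1 ∧ 0 ≤ p.2.1 ∧ 0 ≤ p.2.2 ∧ p.1 + p.2.1 + p.2.2 ≤ 1} =
      ENNReal.ofReal (1 / 6) := by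
  set S := {p : ℝ × ℝ × ℝ | 0 ≤ p.1 ∧ 0 ≤ p.2.1 ∧ 0 ≤ p.2.2 ∧ p.1 + p.2.1 + p.2.2 ≤ 1} with hS
  have hmeas : MeasurableSet S := by
    apply MeasurableSet.inter
    · exact measurableSet_le measurable_const measurable_fst
    apply MeasurableSet.inter
    · exact measurableSet_le measurable_const (measurable_fst.comp measurable_snd)
    apply MeasurableSet.inter
    · exact measurableSet_le measurable_const (measurable_snd.comp measurable_snd)
    · exact measurableSet_le ((measurable_fst.add
        (measurable_fst.comp measurable_snd)).add (measurable_snd.comp measurable_snd))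
        measurable_const
  rw [Measure.volume_eq_prod, Measure.prod_apply hmeas]
  have key : ∀ x : ℝ, volume (Prod.mk x ⁻¹' S) =
      Set.indicator (Icc 0 1) (fun x => ENNReal.ofReal ((1 - x) ^ 2 / 2)) x := by
    intro x
    by_cases h : x ∈ Icc (0:ℝ) 1
    · have : Prod.mk x ⁻¹' S = {q : ℝ × ℝ | 0 ≤ q.1 ∧ 0 ≤ q.2 ∧ q.1 + q.2 ≤ 1 - x} := by
        ext q
        simp only [mem_preimage, hS, mem_setOf_eq]
        constructor
        · rintro ⟨_, h1, h2, h3⟩; exact ⟨h1, h2, by linarith⟩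
        · rintro ⟨h1, h2, h3⟩; exact ⟨h.1, h1, h2, by linarith⟩
      rw [this, tri_vol' (by linarith [h.2] : (0:ℝ) ≤ 1 - x), indicator_of_mem h]
    · have : Prod.mk x ⁻¹' S = ∅ := by
        ext q
        simp only [mem_preimage, hS, mem_setOf_eq, mem_empty_iff_false, iff_false]
        rintro ⟨h1, h2, h3, h4⟩
        simp only [mem_Icc, not_and_or, not_le] at h
        rcases h with h | h
        · linarith
        · linarith
      rw [this, indicator_of_notMem h]
      simp
  rw [lintegral_congr key, lintegral_indicator measurableSet_Icc,
    ← ofReal_integral_eq_lintegral_ofReal]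
  · congr 1
    rw [integral_Icc_eq_integral_Ioc, ← intervalIntegral.integral_of_le (by norm_num : (0:ℝ) ≤ 1)]
    have : ∫ x in (0:ℝ)..1, (1 - x) ^ 2 / 2 = 1 / 6 := by
      rw [intervalIntegral.integral_comp_sub_left (fun x => x ^ 2 / 2) 1]
      norm_num [intervalIntegral.integral_div, integral_pow]
    rw [this]
  · exact (Continuous.integrableOn_Icc (by continuity))
  · filter_upwards [ae_restrict_mem measurableSet_Icc] with y hy
    simp only [mem_Icc, Pi.zero_apply] at hy ⊢
    positivity

private abbrev E3' := EuclideanSpace ℝ (Fin 3)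

private def SE' : Set E3' := {x : E3' | (∀ i, 0 ≤ x i) ∧ x 0 + x 1 + x 2 ≤ 1}

private lemma simplexE_vol' : volume SE' = ENNReal.ofReal (1 / 6) := by
  set T3 := {p : ℝ × ℝ × ℝ | 0 ≤ p.1 ∧ 0 ≤ p.2.1 ∧ 0 ≤ p.2.2 ∧ p.1 + p.2.1 + p.2.2 ≤ 1} with hT3
  have hmeasT3 : MeasurableSet T3 := by
    apply MeasurableSet.inter
    · exact measurableSet_le measurable_const measurable_fst
    apply MeasurableSet.inter
    · exact measurableSet_le measurable_const (measurable_fst.comp measurable_snd)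
    apply MeasurableSet.inter
    · exact measurableSet_le measurable_const (measurable_snd.comp measurable_snd)
    · exact measurableSet_le ((measurable_fst.add
        (measurable_fst.comp measurable_snd)).add (measurable_snd.comp measurable_snd))
        measurable_const
  have h1 := measurePreserving_piFinSuccAbove (fun _ : Fin 3 => (volume : Measure ℝ)) 0
  have h2 := (MeasurePreserving.id (volume : Measure ℝ)).prod
    (volume_preserving_finTwoArrow ℝ)
  have h1' : MeasurePreserving (⇑(MeasurableEquiv.piFinSuccAbove (fun _ : Fin 3 => ℝ) 0))
      volume (volume.prod volume) := by
    simpa only [← volume_pi] using h1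
  have hMP : MeasurePreserving (fun x : Fin 3 → ℝ => (x 0, x 1, x 2))
      volume volume := by
    have h3 := h2.comp h1'
    rw [Measure.volume_eq_prod]
    convert h3 using 1
    · rfl
    · funext x
      rfl
  have hpre : (fun x : Fin 3 → ℝ => (x 0, x 1, x 2)) ⁻¹' T3 =
      {x : Fin 3 → ℝ | (∀ i, 0 ≤ x i) ∧ x 0 + x 1 + x 2 ≤ 1} := by
    ext x
    simp only [mem_preimage, hT3, mem_setOf_eq]
    constructor
    · rintro ⟨a, b, c, d⟩
      refine ⟨fun i => ?_, d⟩
      fin_cases i <;> assumption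
    · rintro ⟨a, d⟩; exact ⟨a 0, a 1, a 2, d⟩
  have hpi : volume {x : Fin 3 → ℝ | (∀ i, 0 ≤ x i) ∧ x 0 + x 1 + x 2 ≤ 1} =
      ENNReal.ofReal (1 / 6) := by
    rw [← hpre, hMP.measure_preimage hmeasT3.nullMeasurableSet, simplex3_vol']
  have hE := (EuclideanSpace.volume_preserving_symm_measurableEquiv_toLp (ι := Fin 3))
  rw [← hpi, ← hE.measure_preimage]
  · rfl
  · apply MeasurableSet.nullMeasurableSet
    apply MeasurableSet.inter
    · show MeasurableSet {x : Fin 3 → ℝ | ∀ i, 0 ≤ x i}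
      rw [Set.setOf_forall]
      exact MeasurableSet.iInter fun i =>
        measurableSet_le measurable_const (measurable_pi_apply i)
    · exact measurableSet_le (((measurable_pi_apply 0).add (measurable_pi_apply 1)).add
        (measurable_pi_apply 2)) measurable_const

private def Tmap' (A B C : E3') : E3' →ₗ[ℝ] E3' where
  toFun x := x 0 • A + x 1 • B + x 2 • C
  map_add' x y := by simp only [PiLp.add_apply]; module
  map_smul' c x := by simp only [PiLp.smul_apply, RingHom.id_apply, smul_eq_mul]; module

private lemma Tmap_single' (A B C : E3') :
    Tmap' A B C (EuclideanSpace.single (0:Fin 3) (1:ℝ)) = A ∧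
    Tmap' A B C (EuclideanSpace.single (1:Fin 3) (1:ℝ)) = B ∧
    Tmap' A B C (EuclideanSpace.single (2:Fin 3) (1:ℝ)) = C := by
  refine ⟨?_, ?_, ?_⟩ <;>
    · simp [Tmap', EuclideanSpace.single_apply]

private lemma SE_eq' : SE' = convexHull ℝ {0, EuclideanSpace.single (0 : Fin 3) (1:ℝ),
    EuclideanSpace.single 1 1, EuclideanSpace.single 2 1} := by
  apply le_antisymm
  · intro x hx
    obtain ⟨hpos, hsum⟩ := hx
    rw [convexHull_eq]
    refine ⟨Fin 4, Finset.univ,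
      ![1 - (x 0 + x 1 + x 2), x 0, x 1, x 2],
      ![0, EuclideanSpace.single 0 1, EuclideanSpace.single 1 1, EuclideanSpace.single 2 1],
      ?_, ?_, ?_, ?_⟩
    · intro i _
      fin_cases i
      · simpa using by linarith
      · exact hpos 0
      · exact hpos 1
      · exact hpos 2
    · simp [Fin.sum_univ_four]; ring
    · intro i _
      fin_cases i <;> simp
    · rw [Finset.centerMass]
      have hs : ∑ i, ![1 - (x 0 + x 1 + x 2), x 0, x 1, x 2] i = 1 := by
        simp [Fin.sum_univ_four]; ring
      rw [hs]
      simp only [inv_one, one_smul, Fin.sum_univ_four]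
      ext i
      fin_cases i <;>
        simp [PiLp.add_apply, PiLp.smul_apply, EuclideanSpace.single_apply]
  · apply convexHull_min
    · rintro y hy
      rcases hy with rfl | rfl | rfl | rfl
      · constructor
        · intro i; rfl
        · norm_num
      all_goals constructor <;>
        first
          | (intro i; simp [EuclideanSpace.single_apply]; try positivity)
          | simp [EuclideanSpace.single_apply]
    · rintro x ⟨hx1, hx2⟩ y ⟨hy1, hy2⟩ a b ha hb hab
      constructor
      · intro i
        simp only [PiLp.add_apply, PiLp.smul_apply, smul_eq_mul]
        have := hx1 i; have := hy1 i
        nlinarith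
      · simp only [PiLp.add_apply, PiLp.smul_apply, smul_eq_mul]
        nlinarith

private lemma det_sq' (A B C : E3') :
    (LinearMap.det (Tmap' A B C)) ^ 2 =
      (inner ℝ A A : ℝ) * (inner ℝ B B : ℝ) * (inner ℝ C C : ℝ)
      + 2 * (inner ℝ A B : ℝ) * (inner ℝ A C : ℝ) * (inner ℝ B C : ℝ)
      - (inner ℝ A B : ℝ) ^ 2 * (inner ℝ C C : ℝ)
      - (inner ℝ A C : ℝ) ^ 2 * (inner ℝ B B : ℝ)
      - (inner ℝ B C : ℝ) ^ 2 * (inner ℝ A A : ℝ) := by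
  classical
  set b := PiLp.basisFun 2 ℝ (Fin 3)
  set M := LinearMap.toMatrix b b (Tmap' A B C) with hM
  have hdet : LinearMap.det (Tmap' A B C) = M.det := (LinearMap.det_toMatrix b _).symm
  have hMe : ∀ i j, M i j = (![A, B, C] j) i := by
    intro i j
    rw [hM, LinearMap.toMatrix_apply]
    have hb : ∀ k : Fin 3, b k = EuclideanSpace.single k (1:ℝ) := by
      intro k; simp [b, PiLp.basisFun_apply]
      try rfl
    have hrepr : ∀ (x : E3') (i : Fin 3), b.repr x i = x i := fun x i => by
      simp [b, PiLp.basisFun_repr]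
    rw [hrepr]
    fin_cases j <;>
      simp [hb, (Tmap_single' A B C).1, (Tmap_single' A B C).2.1, (Tmap_single' A B C).2.2]
  have hsq : M.det ^ 2 = (M.transpose * M).det := by
    rw [Matrix.det_mul, Matrix.det_transpose]; ring
  have hgram : ∀ j k, (M.transpose * M) j k = (inner ℝ (![A,B,C] j) (![A,B,C] k) : ℝ) := by
    intro j k
    rw [Matrix.mul_apply]
    rw [PiLp.inner_apply]
    congr 1
    funext i
    simp [Matrix.transpose_apply, hMe, RCLike.inner_apply, conj_trivial]
    ring
  rw [hdet, hsq, Matrix.det_fin_three]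
  simp only [hgram]
  have sAB : (inner ℝ (![A,B,C] 0) (![A,B,C] 1) : ℝ) = (inner ℝ (![A,B,C] 1) (![A,B,C] 0) : ℝ) :=
    real_inner_comm _ _
  have sAC : (inner ℝ (![A,B,C] 0) (![A,B,C] 2) : ℝ) = (inner ℝ (![A,B,C] 2) (![A,B,C] 0) : ℝ) :=
    real_inner_comm _ _
  have sBC : (inner ℝ (![A,B,C] 1) (![A,B,C] 2) : ℝ) = (inner ℝ (![A,B,C] 2) (![A,B,C] 1) : ℝ) :=
    real_inner_comm _ _
  simp only [Matrix.cons_val_zero, Matrix.cons_val_one, Matrix.head_cons,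
    Matrix.cons_val_two, Matrix.tail_cons] at *
  rw [← sAB, ← sAC, ← sBC]
  ring

end SimplexVol

/-- the volume of the facial tetrahedron `OABC` (apex the center `O = 0`
of the unit sphere, base triangle `ABC` inscribed in the sphere with obtuse angle at `C`),
where `m` is the altitude of the tetrahedron (realized by the circumcenter `K` of `ABC`),
`√(1 - m²)` is the circumradius of `ABC`, and `α_A`, `α_B` are the central angles of the
sides `BC`, `AC` (the side `AB` having central angle `α_A + α_B`), equals
`m(1 - m²)/6 · (sin 2α_A + sin 2α_B − sin 2(α_A + α_B))`, and this quantity is positive. -/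
theorem stmt_18 (αA αB m : ℝ) (hαA : αA ∈ Set.Ioo 0 (π / 2)) (hαB : αB ∈ Set.Ioo 0 (π / 2))
    (hsum : αA + αB < π / 2) (hm0 : 0 < m) (hm1 : m < 1)
    (A B C K : EuclideanSpace ℝ (Fin 3))
    (hA : ‖A‖ = 1) (hB : ‖B‖ = 1) (hC : ‖C‖ = 1)
    -- K is the circumcenter of ABC, at distance m from the center O = 0,
    -- and OK is orthogonal to the plane of ABC:
    (hK : ‖K‖ = m)
    (hKA : dist K A = Real.sqrt (1 - m ^ 2)) (hKB : dist K B = Real.sqrt (1 - m ^ 2))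
    (hKC : dist K C = Real.sqrt (1 - m ^ 2))
    (hperpA : inner ℝ K (A - K) = (0 : ℝ)) (hperpB : inner ℝ K (B - K) = (0 : ℝ))
    (hperpC : inner ℝ K (C - K) = (0 : ℝ))
    -- the central angles of the sides BC, AC and AB are αA, αB and αA + αB:
    (hBC : dist B C = 2 * Real.sqrt (1 - m ^ 2) * Real.sin αA)
    (hAC : dist A C = 2 * Real.sqrt (1 - m ^ 2) * Real.sin αB)
    (hAB : dist A B = 2 * Real.sqrt (1 - m ^ 2) * Real.sin (αA + αB))
    -- the angle of the triangle at C is obtuse: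
    (hobtuse : π / 2 < EuclideanGeometry.angle A C B) :
    (MeasureTheory.volume (convexHull ℝ ({0, A, B, C} : Set (EuclideanSpace ℝ (Fin 3))))).toReal =
      m * (1 - m ^ 2) / 6 *
        (Real.sin (2 * αA) + Real.sin (2 * αB) - Real.sin (2 * (αA + αB))) ∧
    0 < m * (1 - m ^ 2) / 6 *
        (Real.sin (2 * αA) + Real.sin (2 * αB) - Real.sin (2 * (αA + αB))) := by
  obtain ⟨hαA0, hαA2⟩ := hαA
  obtain ⟨hαB0, hαB2⟩ := hαB
  have hπ := Real.pi_pos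
  have hm2 : (0:ℝ) < 1 - m ^ 2 := by nlinarith
  have hr2 : Real.sqrt (1 - m ^ 2) ^ 2 = 1 - m ^ 2 := Real.sq_sqrt hm2.le
  set sa := Real.sin αA with hsa
  set ca := Real.cos αA with hca
  set sb := Real.sin αB with hsb
  set cb := Real.cos αB with hcb
  have hsa0 : 0 < sa := Real.sin_pos_of_pos_of_lt_pi hαA0 (by linarith)
  have hsb0 : 0 < sb := Real.sin_pos_of_pos_of_lt_pi hαB0 (by linarith)
  have hsg0 : 0 < Real.sin (αA + αB) :=
    Real.sin_pos_of_pos_of_lt_pi (by linarith) (by linarith)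
  have hpa : sa ^ 2 + ca ^ 2 = 1 := Real.sin_sq_add_cos_sq αA
  have hpb : sb ^ 2 + cb ^ 2 = 1 := Real.sin_sq_add_cos_sq αB
  have hsg : Real.sin (αA + αB) = sa * cb + ca * sb := Real.sin_add αA αB
  have hcg : Real.cos (αA + αB) = ca * cb - sa * sb := Real.cos_add αA αB
  -- inner products
  have nA : (inner ℝ A A : ℝ) = 1 := by
    rw [real_inner_self_eq_norm_sq, hA]; norm_num
  have nB : (inner ℝ B B : ℝ) = 1 := by
    rw [real_inner_self_eq_norm_sq, hB]; norm_num
  have nC : (inner ℝ C C : ℝ) = 1 := by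
    rw [real_inner_self_eq_norm_sq, hC]; norm_num
  have key : ∀ X Y : EuclideanSpace ℝ (Fin 3), ∀ t : ℝ, ‖X‖ = 1 → ‖Y‖ = 1 →
      dist X Y = 2 * Real.sqrt (1 - m ^ 2) * t →
      (inner ℝ X Y : ℝ) = 1 - 2 * (1 - m ^ 2) * t ^ 2 := by
    intro X Y t hX hY hd
    have h1 : dist X Y ^ 2 = ‖X‖ ^ 2 - 2 * (inner ℝ X Y : ℝ) + ‖Y‖ ^ 2 := by
      rw [dist_eq_norm, @norm_sub_sq_real]
    rw [hX, hY, hd] at h1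
    have h2 : (2 * Real.sqrt (1 - m ^ 2) * t) ^ 2 = 4 * (1 - m ^ 2) * t ^ 2 := by
      rw [mul_pow, mul_pow, hr2]; ring
    rw [h2] at h1
    linarith
  have gAB : (inner ℝ A B : ℝ) = 1 - 2 * (1 - m ^ 2) * Real.sin (αA + αB) ^ 2 := key A B _ hA hB hAB
  have gAC : (inner ℝ A C : ℝ) = 1 - 2 * (1 - m ^ 2) * sb ^ 2 := key A C _ hA hC hAC
  have gBC : (inner ℝ B C : ℝ) = 1 - 2 * (1 - m ^ 2) * sa ^ 2 := key B C _ hB hC hBC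
  -- determinant
  set d := LinearMap.det (Tmap' A B C) with hd
  set t := 4 * m * (1 - m ^ 2) * sa * sb * Real.sin (αA + αB) with ht
  have ht0 : 0 < t := by
    rw [ht]; positivity
  have hdsq : d ^ 2 = t ^ 2 := by
    rw [hd, det_sq', nA, nB, nC, gAB, gAC, gBC, ht, hsg]
    linear_combination (4*sb^4 - 8*sb^4*m^2 + 4*sb^4*m^4 - 4*ca^2*sb^4 + 8*ca^2*sb^4*m^2 - 4*ca^2*sb^4*m^4 - 16*sa*ca*sb^3*cb + 32*sa*ca*sb^3*cb*m^2 - 16*sa*ca*sb^3*cb*m^4 + 8*sa^2*sb^2 - 16*sa^2*sb^2*m^2 + 8*sa^2*sb^2*m^4 - 24*sa^2*sb^2*cb^2 + 48*sa^2*sb^2*cb^2*m^2 - 24*sa^2*sb^2*cb^2*m^4 - 12*sa^2*sb^4 + 24*sa^2*sb^4*m^2 - 12*sa^2*sb^4*m^4) * hpa + (-16*sa^2*sb^2 + 32*sa^2*sb^2*m^2 - 16*sa^2*sb^2*m^4 - 16*sa^3*ca*sb*cb + 32*sa^3*ca*sb*cb*m^2 - 16*sa^3*ca*sb*cb*m^4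 + 4*sa^4 - 8*sa^4*m^2 + 4*sa^4*m^4 - 4*sa^4*cb^2 + 8*sa^4*cb^2*m^2 - 4*sa^4*cb^2*m^4 + 12*sa^4*sb^2 - 24*sa^4*sb^2*m^2 + 12*sa^4*sb^2*m^4) * hpb
  have habs : |d| = t := by
    have h1 : |d| = |t| := by
      rw [← Real.sqrt_sq_eq_abs, ← Real.sqrt_sq_eq_abs, hdsq]
    rw [h1, abs_of_pos ht0]
  have hident : Real.sin (2 * αA) + Real.sin (2 * αB) - Real.sin (2 * (αA + αB)) =
      4 * sa * sb * Real.sin (αA + αB) := by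
    rw [Real.sin_two_mul, Real.sin_two_mul, Real.sin_two_mul, hsg, hcg, ← hsa, ← hca,
      ← hsb, ← hcb]
    linear_combination (-2*sb*cb) * hpa + (-2*sa*ca) * hpb
  have himgset : ⇑(Tmap' A B C) '' {0, EuclideanSpace.single (0 : Fin 3) (1:ℝ),
      EuclideanSpace.single 1 1, EuclideanSpace.single 2 1} = {0, A, B, C} := by
    rw [Set.image_insert_eq, Set.image_insert_eq, Set.image_insert_eq, Set.image_singleton,
      map_zero, (Tmap_single' A B C).1, (Tmap_single' A B C).2.1, (Tmap_single' A B C).2.2]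
  have himg : convexHull ℝ ({0, A, B, C} : Set (EuclideanSpace ℝ (Fin 3))) =
      ⇑(Tmap' A B C) '' SE' := by
    rw [SE_eq', LinearMap.image_convexHull, himgset]
  have hvol : MeasureTheory.volume
      (convexHull ℝ ({0, A, B, C} : Set (EuclideanSpace ℝ (Fin 3)))) =
      ENNReal.ofReal |d| * ENNReal.ofReal (1/6) := by
    rw [himg, Measure.addHaar_image_linearMap, simplexE_vol', hd]
  constructor
  · rw [hvol, ENNReal.toReal_mul, ENNReal.toReal_ofReal (abs_nonneg d),
      ENNReal.toReal_ofReal (by norm_num : (0:ℝ) ≤ 1/6), habs, hident, ht]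
    ring
  · rw [hident]
    positivity
end
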